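/- arXiv:2502.06564 — 3 statements merged into one kernel-verified Lean document; each statement's English description precedes it below -/
import Mathlib

section
/- Let Σ, Σ', Σ̂ ∈ ℝ^{d×d} be positive definite matrices such that, for some Δ ≤ 1, ‖Σ^{-1/2} Σ' Σ^{-1/2} − Id‖_F ≤ Δ and ‖(Σ')^{-1/2} Σ̂ (Σ')^{-1/2} − Id‖_F ≤ Δ. Then ‖Σ^{-1/2} Σ̂ Σ^{-1/2} − Id‖_F ≤ 3Δ. The same implication holds when the Frobenius norm ‖·‖_F is replaced throughout by the spectral (operator) norm ‖·‖. -/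
open MeasureTheory ProbabilityTheory Matrix Finset Real Filter

noncomputable section

namespace Paper

variable {d n : ℕ}

/-- Spectral (operator) norm of a matrix. -/
def specNorm (A : Matrix (Fin d) (Fin d) ℝ) : ℝ :=
  ‖LinearMap.toContinuousLinearMap (Matrix.toEuclideanLin A)‖

/-- Frobenius norm of a matrix. -/
def frobNorm (A : Matrix (Fin d) (Fin d) ℝ) : ℝ :=
  Real.sqrt (∑ i, ∑ j, (A i j) ^ 2)

/-- Effective rank. -/
def erk (A : Matrix (Fin d) (Fin d) ℝ) : ℝ := A.trace / specNorm A

open Classical in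
/-- Positive semidefinite square root (junk value `0` if not psd). -/
def matSqrt (A : Matrix (Fin d) (Fin d) ℝ) : Matrix (Fin d) (Fin d) ℝ :=
  if h : A.PosSemidef then (h.1.eigenvectorUnitary : Matrix (Fin d) (Fin d) ℝ) *
    diagonal ((↑) ∘ (√·) ∘ h.1.eigenvalues) * (star h.1.eigenvectorUnitary : Matrix (Fin d) (Fin d) ℝ)
  else 0

/-- Inverse of the positive semidefinite square root. -/
def invSqrt (A : Matrix (Fin d) (Fin d) ℝ) : Matrix (Fin d) (Fin d) ℝ := (matSqrt A)⁻¹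

/-- Standard Gaussian measure on ℝ^d. -/
def stdGaussian (d : ℕ) : Measure (Fin d → ℝ) :=
  Measure.pi fun _ => gaussianReal 0 1

/-- Centered Gaussian measure with covariance S. -/
def gaussianOf (S : Matrix (Fin d) (Fin d) ℝ) : Measure (Fin d → ℝ) :=
  (stdGaussian d).map (matSqrt S).mulVec

/-- Spatial sign (projection on the sphere of radius √d). -/
def spSign (d : ℕ) (x : Fin d → ℝ) : Fin d → ℝ :=
  fun i => Real.sqrt d * x i / Real.sqrt (∑ j, (x j) ^ 2)

/-- Truncated spatial sign with threshold Δ. -/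
def truncSign (d : ℕ) (Δ : ℝ) (x : Fin d → ℝ) : Fin d → ℝ :=
  if (∑ i, (x i) ^ 2) < (d : ℝ) - Δ then fun i => Real.sqrt ((d : ℝ) / ((d : ℝ) - Δ)) * x i
  else if (d : ℝ) + Δ < (∑ i, (x i) ^ 2) then fun i => Real.sqrt ((d : ℝ) / ((d : ℝ) + Δ)) * x i
  else spSign d x

/-- Mean vector of a measure on ℝ^d. -/
def meanVec (μ : Measure (Fin d → ℝ)) : Fin d → ℝ := fun i => ∫ x, x i ∂μ

/-- Covariance matrix of a measure on ℝ^d. -/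
def covMatrix (μ : Measure (Fin d → ℝ)) : Matrix (Fin d) (Fin d) ℝ :=
  Matrix.of fun i j => ∫ x, (x i - meanVec μ i) * (x j - meanVec μ j) ∂μ

/-- Inner product of vectors indexed by `ι`. -/
def inner1 {ι : Type*} [Fintype ι] (v x : ι → ℝ) : ℝ := ∑ j, v j * x j

/-- Inner product of "matrices" indexed by `ι × ι`. -/
def innerM {ι : Type*} [Fintype ι] (P Q : ι → ι → ℝ) : ℝ := ∑ j, ∑ k, P j k * Q j k

/-- Outer product. -/
def outer {ι : Type*} (x y : ι → ℝ) : ι → ι → ℝ := fun j k => x j * y k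

/-- sup_{v ∈ V} ⟨v, a⟩². -/
def supInner {ι : Type*} [Fintype ι] (V : Set (ι → ℝ)) (a : ι → ℝ) : ℝ :=
  sSup ((fun v => (inner1 v a) ^ 2) '' V)

/-- Generalized stability (Definition 4 of the paper). -/
def IsStable {ι : Type*} [Fintype ι] (x : Fin n → ι → ℝ) (ε δ r : ℝ)
    (V : Set (ι → ℝ)) (P : Set (ι → ι → ℝ)) (μ : ι → ℝ) (Q : ι → ι → ℝ) : Prop :=
  ∀ v ∈ V, ∀ p ∈ P, ∀ M : Finset (Fin n), (1 - ε) * (n : ℝ) ≤ (M.card : ℝ) →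
    |(M.card : ℝ)⁻¹ * ∑ i ∈ M, inner1 v (fun j => x i j - μ j)| ≤ δ ∧
    |(M.card : ℝ)⁻¹ * ∑ i ∈ M, innerM p (outer (fun j => x i j - μ j) (fun j => x i j - μ j))
        - innerM p Q| ≤ δ ^ 2 / ε ∧
    |innerM p Q| ≤ r ^ 2

/-- 𝒱 ⊗ 𝒱 ⊆ 𝒫. -/
def TensorSub {ι : Type*} (V : Set (ι → ℝ)) (P : Set (ι → ι → ℝ)) : Prop :=
  ∀ v ∈ V, ∀ v' ∈ V, outer v v' ∈ P

/-- Adequacy of 𝒫 with respect to 𝒱. -/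
def Adequate {ι : Type*} [Fintype ι] (V : Set (ι → ℝ)) (P : Set (ι → ι → ℝ)) : Prop :=
  (∀ a : ι → ℝ, ∀ p ∈ P, 0 ≤ innerM p (outer a a)) ∧
  (∀ a b : ι → ℝ, ∀ p ∈ P, (innerM p (outer a b)) ^ 2 ≤ supInner V a * supInner V b)

/-- The weight set 𝒲_ε. -/
def weightSet (n : ℕ) (ε : ℝ) : Set (Fin n → ℝ) :=
  {w | (∀ i, 0 ≤ w i ∧ w i ≤ 1 / (n : ℝ)) ∧ 1 - ε ≤ ∑ i, w i}

/-- Weighted mean μ_w. -/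
def wMean {ι : Type*} (w : Fin n → ℝ) (x : Fin n → ι → ℝ) : ι → ℝ :=
  fun j => (∑ i, w i)⁻¹ * ∑ i, w i * x i j

/-- Weighted covariance Σ_w. -/
def wCov {ι : Type*} (w : Fin n → ℝ) (x : Fin n → ι → ℝ) : ι → ι → ℝ :=
  fun j k => (∑ i, w i)⁻¹ * ∑ i, w i * (x i j - wMean w x j) * (x i k - wMean w x k)

/-- A d×d matrix viewed as a vector in ℝ^{d²}. -/
def mvec (A : Matrix (Fin d) (Fin d) ℝ) : Fin d × Fin d → ℝ := fun p => A p.1 p.2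

/-- Id_d as a vector in ℝ^{d²}. -/
def idVec (d : ℕ) : Fin d × Fin d → ℝ := fun p => if p.1 = p.2 then 1 else 0

/-- 2·Id_{d²}. -/
def twoId (d : ℕ) : (Fin d × Fin d) → (Fin d × Fin d) → ℝ :=
  fun p q => if p = q then 2 else 0

/-- The Frobenius-norm ball ℬ_R (as vectors in ℝ^{d²}). -/
def ballF (d : ℕ) (R : ℝ) : Set (Fin d × Fin d → ℝ) :=
  {V | ∑ p : Fin d × Fin d, (V p) ^ 2 ≤ R ^ 2}

/-- ℬ_R ⊗ ℬ_R. -/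
def ballFT (d : ℕ) (R : ℝ) : Set ((Fin d × Fin d) → (Fin d × Fin d) → ℝ) :=
  {P | ∃ V ∈ ballF d R, ∃ W ∈ ballF d R, P = outer V W}

/-- 𝒮_R = {uuᵀ : ‖u‖ ≤ √R}. -/
def sphereSet (d : ℕ) (R : ℝ) : Set (Fin d × Fin d → ℝ) :=
  {V | ∃ u : Fin d → ℝ, (∑ i, (u i) ^ 2) ≤ R ∧ V = fun p => u p.1 * u p.2}

/-- 𝒫_R: the set of degree-4 pseudo-expectation moment matrices Ẽ[v^{⊗4}]
under the constraint ‖v‖² ≤ R. -/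
def pseudoSet (d : ℕ) (R : ℝ) : Set ((Fin d × Fin d) → (Fin d × Fin d) → ℝ) :=
  {P | ∃ L : MvPolynomial (Fin d) ℝ →ₗ[ℝ] ℝ,
    L 1 = 1 ∧
    (∀ q : MvPolynomial (Fin d) ℝ, q.totalDegree ≤ 2 → 0 ≤ L (q ^ 2)) ∧
    (∀ q : MvPolynomial (Fin d) ℝ, q.totalDegree ≤ 1 →
      0 ≤ L ((MvPolynomial.C R - ∑ i, MvPolynomial.X i ^ 2) * q ^ 2)) ∧
    P = fun p q => L (MvPolynomial.X p.1 * MvPolynomial.X p.2 *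
        MvPolynomial.X q.1 * MvPolynomial.X q.2)}

/-- The Hanson–Wright property of a distribution ρ with mean μv and covariance S. -/
def HansonWright (ρ : Measure (Fin d → ℝ)) (μv : Fin d → ℝ)
    (S : Matrix (Fin d) (Fin d) ℝ) (CHW : ℝ) : Prop :=
  ∀ A : Matrix (Fin d) (Fin d) ℝ, ∀ t : ℝ, 0 < t →
    ρ {x | t ≤ |(∑ j, ∑ k, ((invSqrt S).mulVec (fun l => x l - μv l)) j * A j k *
        ((invSqrt S).mulVec (fun l => x l - μv l)) k) - A.trace|}
      ≤ ENNReal.ofReal (2 * Real.exp (-(1 / CHW) *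
          min (t ^ 2 / (frobNorm A) ^ 2) (t / specNorm A)))

/-- ε-corruption of an indexed family of points. -/
def Corruption {α : Type*} (n : ℕ) (ε : ℝ) (x y : Fin n → α) : Prop :=
  ∃ G : Finset (Fin n), (1 - ε) * (n : ℝ) ≤ (G.card : ℝ) ∧ ∀ i ∈ G, x i = y i

/-- Entries of the 4-tensor E[(xxᵀ − Id)^{⊗2}] of a measure μ on ℝ^d. -/
def tensorEnt (μ : Measure (Fin d → ℝ)) (i1 i2 i3 i4 : Fin d) : ℝ :=
  ∫ x, (x i1 * x i2 - if i1 = i2 then (1 : ℝ) else 0) *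
       (x i3 * x i4 - if i3 = i4 then (1 : ℝ) else 0) ∂μ

/-- E[(xxᵀ − Id)^{⊗2}] as a d²×d² matrix. -/
def tensorQ (μ : Measure (Fin d → ℝ)) : (Fin d × Fin d) → (Fin d × Fin d) → ℝ :=
  fun p q => tensorEnt μ p.1 p.2 q.1 q.2

/-! Put `R = Σ^{-1/2}` and `M = R Σ'^{1/2}`. Then `M Mᵀ = R Σ' R` and
`R Σ̂ R - 1 = M (Σ'^{-1/2} Σ̂ Σ'^{-1/2} - 1) Mᵀ + (R Σ' R - 1)`.
Both norms satisfy `‖M X Mᵀ‖ ≤ ‖M‖² ‖X‖` and dominate the spectral norm, so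
`‖M‖² = ‖M Mᵀ‖ ≤ 1 + Δ` and the right-hand side has norm at most `(1 + Δ) Δ + Δ ≤ 3 Δ`. -/

section SpectralNorm

open scoped Matrix.Norms.L2Operator

lemma specNorm_eq_norm (A : Matrix (Fin d) (Fin d) ℝ) : specNorm A = ‖A‖ := rfl

lemma specNorm_add_le (A B : Matrix (Fin d) (Fin d) ℝ) :
    specNorm (A + B) ≤ specNorm A + specNorm B :=
  norm_add_le A B

lemma specNorm_one_le : specNorm (1 : Matrix (Fin d) (Fin d) ℝ) ≤ 1 := by
  rw [specNorm_eq_norm, ← Matrix.l2_opNorm_toEuclideanCLM, map_one]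
  exact ContinuousLinearMap.norm_id_le

lemma specNorm_transpose (A : Matrix (Fin d) (Fin d) ℝ) : specNorm Aᵀ = specNorm A := by
  simpa only [specNorm_eq_norm, Matrix.conjTranspose_eq_transpose_of_trivial] using
    Matrix.l2_opNorm_conjTranspose A

lemma specNorm_mul_transpose_self (M : Matrix (Fin d) (Fin d) ℝ) :
    specNorm (M * Mᵀ) = specNorm M ^ 2 := by
  have h := Matrix.l2_opNorm_conjTranspose_mul_self Mᵀ
  rw [Matrix.conjTranspose_eq_transpose_of_trivial, Matrix.transpose_transpose] at h
  rw [specNorm_eq_norm, h, ← specNorm_eq_norm, specNorm_transpose, sq]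

lemma norm_toLp_mulVec_le (A : Matrix (Fin d) (Fin d) ℝ) (v : Fin d → ℝ) :
    ‖WithLp.toLp 2 (A *ᵥ v)‖ ≤ specNorm A * ‖WithLp.toLp 2 v‖ :=
  Matrix.l2_opNorm_mulVec A (WithLp.toLp 2 v)

lemma specNorm_conj_le (M X : Matrix (Fin d) (Fin d) ℝ) :
    specNorm (M * X * Mᵀ) ≤ specNorm M ^ 2 * specNorm X := by
  calc specNorm (M * X * Mᵀ) ≤ specNorm M * specNorm X * specNorm Mᵀ :=
        norm_mul₃_le (a := M) (b := X) (c := Mᵀ)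
    _ = specNorm M ^ 2 * specNorm X := by rw [specNorm_transpose]; ring

end SpectralNorm

section FrobeniusNorm

open scoped Matrix.Norms.Frobenius

lemma frobNorm_eq_norm (A : Matrix (Fin d) (Fin d) ℝ) : frobNorm A = ‖A‖ := by
  simp [frobNorm, Matrix.frobenius_norm_def, Real.sqrt_eq_rpow]

lemma frobNorm_add_le (A B : Matrix (Fin d) (Fin d) ℝ) :
    frobNorm (A + B) ≤ frobNorm A + frobNorm B := by
  simpa only [frobNorm_eq_norm] using norm_add_le A B

lemma frobNorm_transpose (A : Matrix (Fin d) (Fin d) ℝ) : frobNorm Aᵀ = frobNorm A := by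
  simpa only [frobNorm_eq_norm] using Matrix.frobenius_norm_transpose A

lemma frobNorm_sq_eq_sum_norm_sq_rows (A : Matrix (Fin d) (Fin d) ℝ) :
    frobNorm A ^ 2 = ∑ i, ‖WithLp.toLp 2 (A i)‖ ^ 2 := by
  rw [frobNorm_eq_norm]
  exact PiLp.norm_sq_eq_of_L2 _ (WithLp.toLp 2 fun i => WithLp.toLp 2 (A i))

lemma specNorm_le_frobNorm (A : Matrix (Fin d) (Fin d) ℝ) : specNorm A ≤ frobNorm A := by
  refine ContinuousLinearMap.opNorm_le_bound _ (by rw [frobNorm_eq_norm]; positivity) fun x => ?_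
  change ‖WithLp.toLp 2 (A *ᵥ x.ofLp)‖ ≤ _
  rw [frobNorm_eq_norm, ← Matrix.frobenius_norm_replicateCol (ι := Unit),
    ← Matrix.frobenius_norm_replicateCol (ι := Unit), Matrix.replicateCol_mulVec]
  exact Matrix.frobenius_norm_mul _ _

lemma frobNorm_mul_transpose_le (X M : Matrix (Fin d) (Fin d) ℝ) :
    frobNorm (X * Mᵀ) ≤ frobNorm X * specNorm M := by
  have hrow (i : Fin d) : (X * Mᵀ) i = M *ᵥ X i := by
    ext j; simp [Matrix.mul_apply, Matrix.mulVec, dotProduct, mul_comm]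
  have hsq : frobNorm (X * Mᵀ) ^ 2 ≤ (frobNorm X * specNorm M) ^ 2 := by
    rw [mul_pow, frobNorm_sq_eq_sum_norm_sq_rows, frobNorm_sq_eq_sum_norm_sq_rows, Finset.sum_mul]
    refine Finset.sum_le_sum fun i _ => ?_
    rw [hrow, mul_comm, ← mul_pow]
    exact pow_le_pow_left₀ (norm_nonneg _) (norm_toLp_mulVec_le M (X i)) 2
  exact le_of_sq_le_sq hsq (mul_nonneg (Real.sqrt_nonneg _) (norm_nonneg _))

lemma frobNorm_conj_le (M X : Matrix (Fin d) (Fin d) ℝ) :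
    frobNorm (M * X * Mᵀ) ≤ specNorm M ^ 2 * frobNorm X := by
  calc frobNorm (M * X * Mᵀ) ≤ frobNorm (M * X) * specNorm M := frobNorm_mul_transpose_le _ _
    _ = frobNorm (Xᵀ * Mᵀ) * specNorm M := by rw [← frobNorm_transpose, Matrix.transpose_mul]
    _ ≤ frobNorm Xᵀ * specNorm M * specNorm M := by
        gcongr
        · exact norm_nonneg _
        · exact frobNorm_mul_transpose_le _ _
    _ = specNorm M ^ 2 * frobNorm X := by rw [frobNorm_transpose]; ring

end FrobeniusNorm

section MatSqrt

variable {S : Matrix (Fin d) (Fin d) ℝ}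

lemma matSqrt_mul_self (hS : S.PosSemidef) : matSqrt S * matSqrt S = S := by
  set U : Matrix (Fin d) (Fin d) ℝ := (hS.1.eigenvectorUnitary : Matrix (Fin d) (Fin d) ℝ)
  set D : Matrix (Fin d) (Fin d) ℝ := diagonal fun i => √(hS.1.eigenvalues i)
  have hU : star U * U = 1 := Unitary.coe_star_mul_self _
  have hD : D * D = diagonal hS.1.eigenvalues := by
    rw [diagonal_mul_diagonal]
    exact congrArg diagonal (funext fun i => Real.mul_self_sqrt (hS.eigenvalues_nonneg i))
  have hsqrt : matSqrt S = U * D * star U := by rw [matSqrt, dif_pos hS]; rfl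
  conv_rhs => rw [hS.1.spectral_theorem, Unitary.conjStarAlgAut_apply]
  calc matSqrt S * matSqrt S = U * (D * (star U * U) * D) * star U := by
        simp only [hsqrt, Matrix.mul_assoc]
    _ = _ := by rw [hU, Matrix.mul_one, hD]; rfl

lemma matSqrt_transpose (hS : S.PosSemidef) : (matSqrt S)ᵀ = matSqrt S := by
  rw [← Matrix.conjTranspose_eq_transpose_of_trivial, matSqrt, dif_pos hS]
  simp [Matrix.star_eq_conjTranspose, Matrix.mul_assoc]

lemma invSqrt_transpose (hS : S.PosSemidef) : (invSqrt S)ᵀ = invSqrt S := by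
  rw [invSqrt, Matrix.transpose_nonsing_inv, matSqrt_transpose hS]

lemma isUnit_det_matSqrt (hS : S.PosDef) : IsUnit (matSqrt S).det := by
  have h := hS.det_pos.ne'
  rw [← matSqrt_mul_self hS.posSemidef, Matrix.det_mul] at h
  exact isUnit_iff_ne_zero.mpr (left_ne_zero_of_mul h)

variable {S' : Matrix (Fin d) (Fin d) ℝ}

lemma invSqrt_mul_matSqrt_mul_transpose (hS : S.PosSemidef) (hS' : S'.PosSemidef) :
    invSqrt S * matSqrt S' * (invSqrt S * matSqrt S')ᵀ = invSqrt S * S' * invSqrt S := by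
  rw [Matrix.transpose_mul, invSqrt_transpose hS, matSqrt_transpose hS', Matrix.mul_assoc,
    ← Matrix.mul_assoc (matSqrt S'), matSqrt_mul_self hS', Matrix.mul_assoc]

lemma invSqrt_conj_eq (hS : S.PosSemidef) (hS' : S'.PosDef) (X : Matrix (Fin d) (Fin d) ℝ) :
    invSqrt S * X * invSqrt S
      = invSqrt S * matSqrt S' * (invSqrt S' * X * invSqrt S') * (invSqrt S * matSqrt S')ᵀ := by
  have hunit := isUnit_det_matSqrt hS'
  rw [Matrix.transpose_mul, invSqrt_transpose hS, matSqrt_transpose hS'.posSemidef]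
  simp only [invSqrt, Matrix.mul_assoc, Matrix.mul_nonsing_inv_cancel_left _ _ hunit,
    Matrix.nonsing_inv_mul_cancel_left _ _ hunit]

end MatSqrt

lemma conj_add_le_three_mul {N : Matrix (Fin d) (Fin d) ℝ → ℝ}
    (hadd : ∀ X Y, N (X + Y) ≤ N X + N Y)
    (hconj : ∀ M X, N (M * X * Mᵀ) ≤ specNorm M ^ 2 * N X)
    (hspec : ∀ X, specNorm X ≤ N X)
    {M A B : Matrix (Fin d) (Fin d) ℝ} (hM : M * Mᵀ = 1 + A) {Δ : ℝ} (hΔ : Δ ≤ 1)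
    (hA : N A ≤ Δ) (hB : N B ≤ Δ) : N (M * B * Mᵀ + A) ≤ 3 * Δ := by
  have hB₀ : 0 ≤ N B := (norm_nonneg _).trans (hspec B)
  have hM_le : specNorm M ^ 2 ≤ 1 + Δ := by
    rw [← specNorm_mul_transpose_self, hM]
    linarith [specNorm_add_le 1 A, specNorm_one_le (d := d), hspec A]
  calc N (M * B * Mᵀ + A) ≤ specNorm M ^ 2 * N B + N A :=
        (hadd _ _).trans (by gcongr; exact hconj M B)
    _ ≤ (1 + Δ) * Δ + Δ := by gcongr; linarith
    _ ≤ 3 * Δ := by nlinarith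

theorem relative_norm_triangle_inequality_general {d : ℕ}
    (S S' Sh : Matrix (Fin d) (Fin d) ℝ)
    (hS : S.PosDef) (hS' : S'.PosDef) (Δ : ℝ) (hΔ : Δ ≤ 1) :
    (frobNorm (invSqrt S * S' * invSqrt S - 1) ≤ Δ →
      frobNorm (invSqrt S' * Sh * invSqrt S' - 1) ≤ Δ →
      frobNorm (invSqrt S * Sh * invSqrt S - 1) ≤ 3 * Δ) ∧
    (specNorm (invSqrt S * S' * invSqrt S - 1) ≤ Δ →
      specNorm (invSqrt S' * Sh * invSqrt S' - 1) ≤ Δ →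
      specNorm (invSqrt S * Sh * invSqrt S - 1) ≤ 3 * Δ) := by
  set M := invSqrt S * matSqrt S'
  have hM : M * Mᵀ = 1 + (invSqrt S * S' * invSqrt S - 1) := by
    rw [invSqrt_mul_matSqrt_mul_transpose hS.posSemidef hS'.posSemidef, add_sub_cancel]
  have hsplit : invSqrt S * Sh * invSqrt S - 1
      = M * (invSqrt S' * Sh * invSqrt S' - 1) * Mᵀ + (invSqrt S * S' * invSqrt S - 1) := by
    rw [Matrix.mul_sub, Matrix.sub_mul, Matrix.mul_one, ← invSqrt_conj_eq hS.posSemidef hS',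
      ← invSqrt_mul_matSqrt_mul_transpose hS.posSemidef hS'.posSemidef]
    abel
  rw [hsplit]
  exact ⟨conj_add_le_three_mul frobNorm_add_le frobNorm_conj_le specNorm_le_frobNorm hM hΔ,
    conj_add_le_three_mul specNorm_add_le specNorm_conj_le (fun _ => le_rfl) hM hΔ⟩

/-- triangle-inequality-type transfer for relative Frobenius/spectral norms. -/
theorem relative_norm_triangle_inequality {d : ℕ}
    (S S' Sh : Matrix (Fin d) (Fin d) ℝ)
    (hS : S.PosDef) (hS' : S'.PosDef) (hSh : Sh.PosDef) (Δ : ℝ) (hΔ : Δ ≤ 1) :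
    (frobNorm (invSqrt S * S' * invSqrt S - 1) ≤ Δ →
      frobNorm (invSqrt S' * Sh * invSqrt S' - 1) ≤ Δ →
      frobNorm (invSqrt S * Sh * invSqrt S - 1) ≤ 3 * Δ) ∧
    (specNorm (invSqrt S * S' * invSqrt S - 1) ≤ Δ →
      specNorm (invSqrt S' * Sh * invSqrt S' - 1) ≤ Δ →
      specNorm (invSqrt S * Sh * invSqrt S - 1) ≤ 3 * Δ) :=
  relative_norm_triangle_inequality_general S S' Sh hS hS' Δ hΔ

end Paper
end
end

section
/- Let m ∈ ℕ, 𝒱 ⊆ ℝ^m, 𝒫 ⊆ ℝ^{m×m} with 𝒱⊗𝒱 ⊆ 𝒫, μ ∈ ℝ^m, Q ∈ ℝ^{m×m}, and reals ε, δ, r > 0 with ε < δ < 0.1. Let S be a (2ε, δ, r, 𝒱, 𝒫)-stable multiset of size n with respect to μ and Q, and let T = {x_1,…,x_n} be an ε-corruption of S. If for some w ∈ 𝒲_ε and λ > 0 we have |⟨P, Q − Σ_w⟩| ≤ λ for all P ∈ 𝒫, then sup_{v∈𝒱} |⟨v, μ_w − μ⟩| ≤ O(δ + √(ελ) + ε·r).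 -/
open MeasureTheory ProbabilityTheory Matrix Finset Real Filter

noncomputable section

namespace Paper

variable {d n : ℕ}

/-!
Fix `v ∈ 𝒱`. Since `vvᵀ ∈ 𝒫`, everything projects to real numbers: `f i = ⟨v, y i - μ⟩` is
a stable family, `g i = ⟨v, x i - μ⟩` agrees with it off the corrupted indices, and
`a = ⟨v, μ_w - μ⟩`. On the set `G` of uncorrupted indices the weights fall short of `1/n` by
a deficit `d` of total mass `≤ 2ε`. As `d ≤ 1/n`, `∑ d f²` is at most `1/n` times the sum of
`f²` over the `⌈n ∑ d⌉` largest values, which stability bounds by `O(n (εr² + δ²/ε))`; if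
`2εn < 1` nothing is corrupted and the covariance hypothesis gives `O(εr² + δ²/ε + λ)`
instead. Cauchy–Schwarz then makes the good part of `(∑_G w) a` of size `O(K)`, where
`K = δ + √(ελ) + εr`. The corrupted indices carry weight `≤ ε`; their weighted second moment
around `a` is the total one, which the covariance hypothesis caps near `⟨vvᵀ, Q⟩`, minus the
good one, which stability keeps near the same value. So their contribution `c` satisfies
`c² ≤ O(K²) + |a| K`, and `0.8 |a| ≤ 4K + |c|` forces `|a| = O(K)`.
-/

lemma cast_card_le_of_fin (G : Finset (Fin n)) : (#G : ℝ) ≤ n := by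
  exact_mod_cast card_le_univ G |>.trans_eq (Fintype.card_fin n)

lemma cast_card_compl_of_fin (G : Finset (Fin n)) : (#Gᶜ : ℝ) = n - #G := by
  rw [card_compl, Fintype.card_fin, Nat.cast_sub (by simpa using card_le_univ G)]

lemma sq_sum_mul_le_sum_mul_sum_mul_sq {ι : Type*} (s : Finset ι) {d x : ι → ℝ}
    (hd : ∀ i ∈ s, 0 ≤ d i) :
    (∑ i ∈ s, d i * x i) ^ 2 ≤ (∑ i ∈ s, d i) * ∑ i ∈ s, d i * x i ^ 2 :=
  sum_sq_le_sum_mul_sum_of_sq_le_mul s hd (fun i hi => mul_nonneg (hd i hi) (sq_nonneg _))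
    fun i _ => (by ring : _ = _).le

lemma sq_add_add_sq_le_sq {x y z : ℝ} (hy : 0 ≤ y) (hx : 0 ≤ x) (hz : 0 ≤ z) :
    x ^ 2 + y + z ^ 2 ≤ (x + √y + z) ^ 2 := by
  nlinarith [Real.sq_sqrt hy, Real.sqrt_nonneg y]

section HeaviestPoints

variable {α : Type*} [DecidableEq α]

lemma exists_subset_card_eq_forall_le (s : Finset α) (F : α → ℝ) {k : ℕ} (hk : k ≤ #s) :
    ∃ B ⊆ s, #B = k ∧ ∀ i ∈ B, ∀ j ∈ s \ B, F j ≤ F i := by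
  obtain ⟨B, hB, hmax⟩ := exists_max_image (s.powersetCard k) (fun B => ∑ i ∈ B, F i)
    (powersetCard_nonempty.2 hk)
  obtain ⟨hBs, hBk⟩ := mem_powersetCard.1 hB
  refine ⟨B, hBs, hBk, fun i hi j hj => not_lt.1 fun hlt => ?_⟩
  obtain ⟨hjs, hjB⟩ := mem_sdiff.1 hj
  have hjB' : j ∉ B.erase i := fun h => hjB (mem_of_mem_erase h)
  have hswap : insert j (B.erase i) ∈ s.powersetCard k := by
    refine mem_powersetCard.2 ⟨insert_subset hjs ((erase_subset i B).trans hBs), ?_⟩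
    rw [card_insert_of_notMem hjB', card_erase_of_mem hi, hBk,
      Nat.sub_add_cancel (hBk ▸ card_pos.2 ⟨i, hi⟩)]
  have := hmax _ hswap
  rw [sum_insert hjB', sum_erase_eq_sub hi] at this
  linarith

lemma sum_mul_le_mul_sum_of_forall_le {s B : Finset α} {d F : α → ℝ} {c : ℝ} (hBs : B ⊆ s)
    (hd : ∀ i ∈ s, 0 ≤ d i ∧ d i ≤ c) (hF : ∀ i ∈ s, 0 ≤ F i)
    (hsep : ∀ i ∈ B, ∀ j ∈ s \ B, F j ≤ F i) (hmass : ∑ i ∈ s, d i ≤ #B * c) :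
    ∑ i ∈ s, d i * F i ≤ c * ∑ i ∈ B, F i := by
  obtain ⟨m, hm0, hout, hin⟩ : ∃ m, 0 ≤ m ∧ (∀ j ∈ s \ B, F j ≤ m) ∧ ∀ i ∈ B, m ≤ F i := by
    obtain rfl | hB := B.eq_empty_or_nonempty
    · exact ⟨∑ i ∈ s, F i, sum_nonneg hF, fun j hj =>
        single_le_sum hF (mem_sdiff.1 hj).1, by simp⟩
    obtain ⟨i₀, hi₀, hmin⟩ := exists_min_image B F hB
    exact ⟨F i₀, hF i₀ (hBs hi₀), fun j hj => hsep i₀ hi₀ j hj, hmin⟩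
  have hOut : ∑ i ∈ s \ B, d i * F i ≤ m * ∑ i ∈ s \ B, d i := by
    rw [mul_sum]
    exact sum_le_sum fun j hj => by
      rw [mul_comm m]
      exact mul_le_mul_of_nonneg_left (hout j hj) (hd j (mem_sdiff.1 hj).1).1
  have hIn : m * ∑ i ∈ B, (c - d i) ≤ ∑ i ∈ B, (c - d i) * F i := by
    rw [mul_sum]
    exact sum_le_sum fun i hi => by
      rw [mul_comm m]
      exact mul_le_mul_of_nonneg_left (hin i hi) (by linarith [(hd i (hBs hi)).2])
  have hsplit := sum_sdiff hBs (f := d)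
  have hsplitF := sum_sdiff hBs (f := fun i => d i * F i)
  have hcF : c * ∑ i ∈ B, F i = ∑ i ∈ B, (c - d i) * F i + ∑ i ∈ B, d i * F i := by
    rw [← sum_add_distrib, mul_sum]
    exact sum_congr rfl fun i _ => by ring
  rw [sum_sub_distrib, sum_const, nsmul_eq_mul] at hIn
  nlinarith [mul_le_mul_of_nonneg_left hmass hm0]

lemma exists_subset_card_eq_sum_mul_le {s : Finset α} {d F : α → ℝ} {c : ℝ} {k : ℕ}
    (hk : k ≤ #s) (hd : ∀ i ∈ s, 0 ≤ d i ∧ d i ≤ c) (hF : ∀ i ∈ s, 0 ≤ F i)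
    (hmass : ∑ i ∈ s, d i ≤ k * c) :
    ∃ B ⊆ s, #B = k ∧ ∑ i ∈ s, d i * F i ≤ c * ∑ i ∈ B, F i := by
  obtain ⟨B, hBs, hBk, hsep⟩ := exists_subset_card_eq_forall_le s F hk
  exact ⟨B, hBs, hBk, sum_mul_le_mul_sum_of_forall_le hBs hd hF hsep (hBk ▸ hmass)⟩

end HeaviestPoints

/-- Conditions (1) and (2) of Definition 4 for real numbers, with the averages multiplied out. -/
def ScalarStable (f : Fin n → ℝ) (ε δ q : ℝ) : Prop :=
  ∀ M : Finset (Fin n), (1 - ε) * n ≤ #M →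
    |∑ i ∈ M, f i| ≤ #M * δ ∧ |∑ i ∈ M, f i ^ 2 - #M * q| ≤ #M * (δ ^ 2 / ε)

namespace ScalarStable

variable {f : Fin n → ℝ} {ε δ q : ℝ}

lemma sum_sq_le_of_card_le (hf : ScalarStable f ε δ q) (hε : 0 ≤ ε)
    {B : Finset (Fin n)} (hB : #B ≤ ε * n) :
    ∑ i ∈ B, f i ^ 2 ≤ #B * q + 2 * n * (δ ^ 2 / ε) := by
  have hη : 0 ≤ δ ^ 2 / ε := by positivity
  have hall := (abs_le.1 (hf univ (by rw [card_univ, Fintype.card_fin]; nlinarith)).2).2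
  have hrest := (abs_le.1 (hf Bᶜ (by rw [cast_card_compl_of_fin]; linarith)).2).1
  rw [card_univ, Fintype.card_fin] at hall
  rw [cast_card_compl_of_fin] at hrest
  have hsplit := sum_add_sum_compl B (fun i => f i ^ 2)
  nlinarith [mul_nonneg (Nat.cast_nonneg (α := ℝ) #B) hη]

lemma sum_sq_le_of_card_le_add_one (hf : ScalarStable f ε δ q) (hε : 0 ≤ ε) (hn : 1 ≤ ε * n)
    {B : Finset (Fin n)} (hB : #B ≤ ε * n + 1) :
    ∑ i ∈ B, f i ^ 2 ≤ #B * q + 4 * n * (δ ^ 2 / ε) := by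
  have hη : 0 ≤ n * (δ ^ 2 / ε) := by positivity
  obtain rfl | ⟨j, hj⟩ := B.eq_empty_or_nonempty
  · simpa using by positivity
  have hcard : (#(B.erase j) : ℝ) = #B - 1 := by
    rw [card_erase_of_mem hj, Nat.cast_sub (card_pos.2 ⟨j, hj⟩), Nat.cast_one]
  have hj' := hf.sum_sq_le_of_card_le hε (B := {j}) (by simpa using hn)
  have hrest := hf.sum_sq_le_of_card_le hε (B := B.erase j) (by rw [hcard]; linarith)
  rw [← add_sum_erase B _ hj]
  simp only [sum_singleton, card_singleton, Nat.cast_one] at hj'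
  rw [hcard] at hrest
  linarith

lemma sum_mul_sq_le (hf : ScalarStable f ε δ q) (hε : 0 ≤ ε) (hn : 1 ≤ ε * n) {r : ℝ}
    (hq : |q| ≤ r ^ 2) {s : Finset (Fin n)} {d : Fin n → ℝ}
    (hd : ∀ i ∈ s, 0 ≤ d i ∧ d i ≤ 1 / n) (hmass : ∑ i ∈ s, d i ≤ ε) :
    ∑ i ∈ s, d i * f i ^ 2 ≤ 2 * ε * r ^ 2 + 4 * (δ ^ 2 / ε) := by
  have hn0 : (0 : ℝ) < n := pos_of_mul_pos_right (by linarith) hε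
  have hD0 : 0 ≤ ∑ i ∈ s, d i := sum_nonneg fun i hi => (hd i hi).1
  set k := ⌈n * ∑ i ∈ s, d i⌉₊
  have hks : k ≤ #s := by
    have := sum_le_card_nsmul s d (1 / n) fun i hi => (hd i hi).2
    rw [nsmul_eq_mul] at this
    refine Nat.ceil_le.2 ?_
    calc n * ∑ i ∈ s, d i ≤ n * (#s * (1 / n)) := by gcongr
      _ = #s := by field_simp
  have hkmass : ∑ i ∈ s, d i ≤ k * (1 / n) := by
    rw [mul_one_div, le_div_iff₀ hn0, mul_comm]
    exact Nat.le_ceil _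
  have hk : (k : ℝ) ≤ ε * n + 1 := by
    have := Nat.ceil_lt_add_one (mul_nonneg hn0.le hD0)
    nlinarith
  obtain ⟨B, -, hBk, hle⟩ := exists_subset_card_eq_sum_mul_le hks hd
    (fun i _ => sq_nonneg (f i)) hkmass
  have htail := hf.sum_sq_le_of_card_le_add_one hε hn (B := B) (by rw [hBk]; exact hk)
  have hkq : (k : ℝ) * q ≤ 2 * ε * n * r ^ 2 := by
    nlinarith [le_of_abs_le hq, sq_nonneg r, (Nat.cast_nonneg k : (0 : ℝ) ≤ k)]
  rw [hBk] at htail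
  calc ∑ i ∈ s, d i * f i ^ 2 ≤ 1 / n * ∑ i ∈ B, f i ^ 2 := hle
    _ ≤ 1 / n * (2 * ε * n * r ^ 2 + 4 * n * (δ ^ 2 / ε)) := by gcongr; linarith
    _ = 2 * ε * r ^ 2 + 4 * (δ ^ 2 / ε) := by field_simp

end ScalarStable

section Weights

variable {ε : ℝ} {w : Fin n → ℝ}

lemma sum_le_one_of_mem_weightSet (hw : w ∈ weightSet n ε) : ∑ i, w i ≤ 1 := by
  calc ∑ i, w i ≤ ∑ _i : Fin n, 1 / (n : ℝ) := sum_le_sum fun i _ => (hw.1 i).2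
    _ ≤ 1 := by
      rw [sum_const, card_univ, Fintype.card_fin, nsmul_eq_mul, mul_one_div]
      exact div_self_le_one _

lemma sum_pos_of_mem_weightSet (hw : w ∈ weightSet n ε) (hε : ε < 1) : 0 < ∑ i, w i := by
  linarith [hw.2]

lemma cast_pos_of_mem_weightSet (hw : w ∈ weightSet n ε) (hε : ε < 1) : (0 : ℝ) < n := by
  rcases Nat.eq_zero_or_pos n with rfl | hn
  · simpa using sum_pos_of_mem_weightSet hw hε
  · exact_mod_cast hn

variable {G : Finset (Fin n)}

lemma sum_compl_le_of_mem_weightSet (hw : w ∈ weightSet n ε) (hG : (1 - ε) * n ≤ #G) :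
    ∑ i ∈ Gᶜ, w i ≤ ε := by
  calc ∑ i ∈ Gᶜ, w i ≤ #Gᶜ * (1 / n) := by
        simpa using sum_le_card_nsmul Gᶜ w (1 / n) fun i _ => (hw.1 i).2
    _ ≤ ε := by
      rcases Nat.eq_zero_or_pos n with rfl | hn
      · simpa using (sum_le_one_of_mem_weightSet hw).trans' hw.2
      · rw [cast_card_compl_of_fin, mul_one_div, div_le_iff₀ (by exact_mod_cast hn)]
        linarith

lemma one_sub_two_mul_le_sum_of_mem_weightSet (hw : w ∈ weightSet n ε)
    (hG : (1 - ε) * n ≤ #G) : 1 - 2 * ε ≤ ∑ i ∈ G, w i := by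
  linarith [sum_add_sum_compl G w, sum_compl_le_of_mem_weightSet hw hG, hw.2]

lemma sum_deficit_le_of_mem_weightSet (hw : w ∈ weightSet n ε) (hG : (1 - ε) * n ≤ #G) :
    ∑ i ∈ G, (1 / n - w i) ≤ 2 * ε := by
  have hGn : (#G : ℝ) * (1 / n) ≤ 1 := by
    rw [mul_one_div]
    exact div_le_one_of_le₀ (cast_card_le_of_fin G) (by positivity)
  rw [sum_sub_distrib, sum_const, nsmul_eq_mul]
  linarith [one_sub_two_mul_le_sum_of_mem_weightSet hw hG]

lemma sum_deficit_mul_sq_le_of_variance {f : Fin n → ℝ} {r q η lam a : ℝ}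
    (hw : w ∈ weightSet n ε) (hε : ε < 1) (hq : |q| ≤ r ^ 2) (hlam : 0 ≤ lam)
    (hsq : ∑ i, f i ^ 2 ≤ n * (q + η)) (hmean : (∑ i, w i) * a = ∑ i, w i * f i)
    (hvar : q - lam ≤ (∑ i, w i)⁻¹ * ∑ i, w i * (f i - a) ^ 2) :
    ∑ i, (1 / n - w i) * f i ^ 2 ≤ ε * r ^ 2 + η + lam := by
  set s := ∑ i, w i
  have hs := sum_pos_of_mem_weightSet hw hε
  have hs1 := sum_le_one_of_mem_weightSet hw
  have hn := cast_pos_of_mem_weightSet hw hε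
  have hvariance : ∑ i, w i * (f i - a) ^ 2 = ∑ i, w i * f i ^ 2 - s * a ^ 2 := by
    have : ∀ i, w i * (f i - a) ^ 2 = w i * f i ^ 2 - 2 * a * (w i * f i) + a ^ 2 * w i :=
      fun i => by ring
    simp only [this, sum_add_distrib, sum_sub_distrib, ← mul_sum, ← hmean, s]
    ring
  rw [hvariance, le_inv_mul_iff₀ hs] at hvar
  have hdeficit : ∑ i, (1 / n - w i) * f i ^ 2
      = 1 / n * ∑ i, f i ^ 2 - ∑ i, w i * f i ^ 2 := by
    rw [mul_sum, ← sum_sub_distrib]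
    exact sum_congr rfl fun i _ => by ring
  have hmoment : 1 / n * ∑ i, f i ^ 2 ≤ q + η := by
    rw [one_div_mul_eq_div, div_le_iff₀ hn]; linarith
  nlinarith [le_of_abs_le hq, hw.2, sq_nonneg a]

end Weights

/-- The hypotheses of the theorem seen along one direction `v ∈ 𝒱`: `f i = ⟨v, y i - μ⟩`,
`g i = ⟨v, x i - μ⟩`, `q = ⟨vvᵀ, Q⟩`, `a = ⟨v, μ_w - μ⟩`, and `G` the uncorrupted indices. -/
structure ProjectedSetting (ε δ r lam q a : ℝ) (f g w : Fin n → ℝ) (G : Finset (Fin n)) :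
    Prop where
  eps_pos : 0 < ε
  eps_le : ε ≤ 0.1
  delta_nonneg : 0 ≤ δ
  r_nonneg : 0 ≤ r
  mem_weightSet : w ∈ weightSet n ε
  card_good : (1 - ε) * n ≤ #G
  eq_on_good : ∀ i ∈ G, g i = f i
  stable : ScalarStable f (2 * ε) δ q
  abs_le_sq : |q| ≤ r ^ 2
  mean : (∑ i, w i) * a = ∑ i, w i * g i
  cov : |q - (∑ i, w i)⁻¹ * ∑ i, w i * (g i - a) ^ 2| ≤ lam

namespace ProjectedSetting

variable {ε δ r lam q a : ℝ} {f g w : Fin n → ℝ} {G : Finset (Fin n)}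

lemma lam_nonneg (h : ProjectedSetting ε δ r lam q a f g w G) : 0 ≤ lam :=
  (abs_nonneg _).trans h.cov

lemma card_good_ge (h : ProjectedSetting ε δ r lam q a f g w G) : (1 - 2 * ε) * n ≤ #G := by
  nlinarith [h.card_good, h.eps_pos, (Nat.cast_nonneg n : (0 : ℝ) ≤ n)]

lemma deficit_mem (h : ProjectedSetting ε δ r lam q a f g w G) (i : Fin n) :
    0 ≤ 1 / n - w i ∧ 1 / n - w i ≤ 1 / n :=
  ⟨sub_nonneg.2 (h.mem_weightSet.1 i).2, sub_le_self _ (h.mem_weightSet.1 i).1⟩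

lemma sq_add_le_sq_and_nonneg (h : ProjectedSetting ε δ r lam q a f g w G) :
    δ ^ 2 + ε * lam + (ε * r) ^ 2 ≤ (δ + √(ε * lam) + ε * r) ^ 2 ∧
      0 ≤ δ + √(ε * lam) + ε * r := by
  have hρ := mul_nonneg h.eps_pos.le h.r_nonneg
  exact ⟨sq_add_add_sq_le_sq (mul_nonneg h.eps_pos.le h.lam_nonneg) h.delta_nonneg hρ,
    by have := h.delta_nonneg; positivity⟩

lemma sum_deficit_mul_sq_le (h : ProjectedSetting ε δ r lam q a f g w G) :
    ∑ i ∈ G, (1 / n - w i) * f i ^ 2 ≤ 4 * ε * r ^ 2 + 2 * (δ ^ 2 / ε) + lam := by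
  have hε := h.eps_pos
  have hlam := h.lam_nonneg
  have hη : δ ^ 2 / (2 * ε) = δ ^ 2 / ε / 2 := by ring
  rcases le_or_gt 1 (2 * ε * n) with hn | hn
  · have := h.stable.sum_mul_sq_le (by positivity) hn h.abs_le_sq (s := G)
      (fun i _ => h.deficit_mem i) (sum_deficit_le_of_mem_weightSet h.mem_weightSet h.card_good)
    linarith
  have hG : G = univ := by
    refine eq_univ_of_card G (Nat.le_antisymm (card_le_univ G |>.trans_eq (by simp)) ?_)
    have : (n : ℝ) < #G + 1 := by nlinarith [h.card_good]
    rw [Fintype.card_fin]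
    exact Nat.lt_succ_iff.1 (by exact_mod_cast this)
  subst hG
  have hsq := (abs_le.1 (h.stable univ (by simpa using by nlinarith)).2).2
  rw [card_univ, Fintype.card_fin] at hsq
  obtain rfl : g = f := funext fun i => h.eq_on_good i (mem_univ i)
  have := sum_deficit_mul_sq_le_of_variance h.mem_weightSet (by linarith [h.eps_le])
    h.abs_le_sq hlam (η := δ ^ 2 / (2 * ε)) (by linarith) h.mean
    (by linarith [abs_le.1 h.cov])
  nlinarith [sq_nonneg r, div_nonneg (sq_nonneg δ) hε.le]

lemma mul_sum_good_eq (h : ProjectedSetting ε δ r lam q a f g w G) :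
    (∑ i ∈ G, w i) * a = ∑ i ∈ G, w i * f i + ∑ i ∈ Gᶜ, w i * (g i - a) := by
  have hgood : ∑ i ∈ G, w i * g i = ∑ i ∈ G, w i * f i :=
    sum_congr rfl fun i hi => by rw [h.eq_on_good i hi]
  have hbad : ∑ i ∈ Gᶜ, w i * (g i - a) = ∑ i ∈ Gᶜ, w i * g i - (∑ i ∈ Gᶜ, w i) * a := by
    rw [sum_mul, ← sum_sub_distrib]
    exact sum_congr rfl fun i _ => by ring
  linear_combination a * (sum_add_sum_compl G w) - sum_add_sum_compl G (fun i => w i * g i)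
    + h.mean + hgood - hbad

lemma abs_sum_good_le (h : ProjectedSetting ε δ r lam q a f g w G) :
    |∑ i ∈ G, w i * f i| ≤ 4 * (δ + √(ε * lam) + ε * r) := by
  have hε := h.eps_pos
  have hlam := h.lam_nonneg
  obtain ⟨hK, hK0⟩ := h.sq_add_le_sq_and_nonneg
  have hsplit : ∑ i ∈ G, w i * f i
      = 1 / n * ∑ i ∈ G, f i - ∑ i ∈ G, (1 / n - w i) * f i := by
    rw [mul_sum, ← sum_sub_distrib]
    exact sum_congr rfl fun i _ => by ring
  have huniform : |1 / n * ∑ i ∈ G, f i| ≤ δ := by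
    rw [abs_mul, abs_of_nonneg (by positivity)]
    calc 1 / n * |∑ i ∈ G, f i| ≤ 1 / n * (#G * δ) := by
          gcongr; exact (h.stable G h.card_good_ge).1
      _ = (#G : ℝ) / n * δ := by ring
      _ ≤ 1 * δ := by
          gcongr; exact h.delta_nonneg
          exact div_le_one_of_le₀ (cast_card_le_of_fin G) (by positivity)
      _ = δ := one_mul δ
  have hCS := sq_sum_mul_le_sum_mul_sum_mul_sq G (x := f) fun i _ => (h.deficit_mem i).1
  have hD := sum_deficit_le_of_mem_weightSet h.mem_weightSet h.card_good
  have hX := h.sum_deficit_mul_sq_le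
  have hX0 : 0 ≤ ∑ i ∈ G, (1 / n - w i) * f i ^ 2 :=
    sum_nonneg fun i _ => mul_nonneg (h.deficit_mem i).1 (sq_nonneg _)
  have hεη : ε * (δ ^ 2 / ε) = δ ^ 2 := by field_simp
  have hdeficit : |∑ i ∈ G, (1 / n - w i) * f i| ≤ 3 * (δ + √(ε * lam) + ε * r) :=
    abs_le_of_sq_le_sq (by nlinarith) (by positivity)
  rw [hsplit]
  have := Real.sqrt_nonneg (ε * lam)
  have := mul_nonneg hε.le h.r_nonneg
  exact (abs_sub _ _).trans (by linarith)

lemma sum_compl_mul_sq_le (h : ProjectedSetting ε δ r lam q a f g w G) :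
    ∑ i ∈ Gᶜ, w i * (g i - a) ^ 2 ≤ ε * r ^ 2 + lam + δ ^ 2 / (2 * ε)
      + ∑ i ∈ G, (1 / n - w i) * f i ^ 2 + 2 * |a| * |∑ i ∈ G, w i * f i| := by
  have hε := h.eps_pos
  have hlam := h.lam_nonneg
  set s := ∑ i, w i
  have hs : 0 < s := sum_pos_of_mem_weightSet h.mem_weightSet (by linarith [h.eps_le])
  have hs1 : s ≤ 1 := sum_le_one_of_mem_weightSet h.mem_weightSet
  have hn := cast_pos_of_mem_weightSet h.mem_weightSet (by linarith [h.eps_le])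
  have htotal : ∑ i, w i * (g i - a) ^ 2 ≤ s * (q + lam) := by
    rw [← inv_mul_le_iff₀ hs]; linarith [abs_le.1 h.cov]
  have hgood : 1 / n * ∑ i ∈ G, f i ^ 2 - ∑ i ∈ G, (1 / n - w i) * f i ^ 2
      - 2 * a * ∑ i ∈ G, w i * f i ≤ ∑ i ∈ G, w i * (g i - a) ^ 2 := by
    rw [mul_sum, mul_sum, ← sum_sub_distrib, ← sum_sub_distrib]
    refine sum_le_sum fun i hi => ?_
    rw [h.eq_on_good i hi]
    nlinarith [mul_nonneg (h.mem_weightSet.1 i).1 (sq_nonneg a)]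
  set γ : ℝ := #G / n
  have hγ : 1 - ε ≤ γ := by rw [le_div_iff₀ hn]; exact h.card_good
  have hγ1 : γ ≤ 1 := div_le_one_of_le₀ (cast_card_le_of_fin G) hn.le
  have hstab : γ * (q - δ ^ 2 / (2 * ε)) ≤ 1 / n * ∑ i ∈ G, f i ^ 2 := by
    have := (abs_le.1 (h.stable G h.card_good_ge).2).1
    rw [div_mul_eq_mul_div, one_div_mul_eq_div, div_le_div_iff_of_pos_right hn]
    linarith
  have hq := abs_le.1 h.abs_le_sq
  have hshift : s * q - γ * q ≤ ε * r ^ 2 := by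
    have := h.mem_weightSet.2
    nlinarith [mul_nonneg (by linarith : 0 ≤ ε - (s - γ)) (by linarith : 0 ≤ r ^ 2 + q),
      mul_nonneg (by linarith : 0 ≤ ε + (s - γ)) (by linarith : 0 ≤ r ^ 2 - q)]
  have hη : γ * (δ ^ 2 / (2 * ε)) ≤ δ ^ 2 / (2 * ε) :=
    mul_le_of_le_one_left (by positivity) hγ1
  have hcross : a * ∑ i ∈ G, w i * f i ≤ |a| * |∑ i ∈ G, w i * f i| :=
    (le_abs_self _).trans (abs_mul _ _).le
  have := sum_add_sum_compl G fun i => w i * (g i - a) ^ 2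
  nlinarith

lemma sq_sum_compl_le (h : ProjectedSetting ε δ r lam q a f g w G) :
    (∑ i ∈ Gᶜ, w i * (g i - a)) ^ 2 ≤ ε * ∑ i ∈ Gᶜ, w i * (g i - a) ^ 2 :=
  (sq_sum_mul_le_sum_mul_sum_mul_sq Gᶜ fun i _ => (h.mem_weightSet.1 i).1).trans <|
    mul_le_mul_of_nonneg_right (sum_compl_le_of_mem_weightSet h.mem_weightSet h.card_good)
      (sum_nonneg fun i _ => mul_nonneg (h.mem_weightSet.1 i).1 (sq_nonneg _))

theorem abs_le_fourteen_mul (h : ProjectedSetting ε δ r lam q a f g w G) :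
    |a| ≤ 14 * (δ + √(ε * lam) + ε * r) := by
  have hε := h.eps_pos
  obtain ⟨hK, hK0⟩ := h.sq_add_le_sq_and_nonneg
  have hu := h.abs_sum_good_le
  set K := δ + √(ε * lam) + ε * r
  set c := ∑ i ∈ Gᶜ, w i * (g i - a)
  have hWg : 0.8 ≤ ∑ i ∈ G, w i := by
    linarith [one_sub_two_mul_le_sum_of_mem_weightSet h.mem_weightSet h.card_good, h.eps_le]
  have hmean : 0.8 * |a| ≤ 4 * K + |c| := by
    calc 0.8 * |a| ≤ |(∑ i ∈ G, w i) * a| := by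
          rw [abs_mul, abs_of_pos (a := ∑ i ∈ G, w i) (by linarith)]; gcongr
      _ ≤ 4 * K + |c| := by
          rw [h.mul_sum_good_eq]; linarith [abs_add_le (∑ i ∈ G, w i * f i) c]
  have hbad : |c| ^ 2 ≤ 5 * K ^ 2 + |a| * K := by
    have hY := mul_le_mul_of_nonneg_left h.sum_compl_mul_sq_le hε.le
    have hX := mul_le_mul_of_nonneg_left h.sum_deficit_mul_sq_le hε.le
    have hcross : ε * (2 * |a| * |∑ i ∈ G, w i * f i|) ≤ 0.1 * (2 * |a| * (4 * K)) := by
      gcongr; exact h.eps_le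
    have hεη : ε * (δ ^ 2 / (2 * ε)) = δ ^ 2 / 2 := by field_simp
    have hεη' : ε * (δ ^ 2 / ε) = δ ^ 2 := by field_simp
    rw [sq_abs]
    refine h.sq_sum_compl_le.trans ?_
    nlinarith [h.eps_le, abs_nonneg a, h.lam_nonneg]
  nlinarith [abs_nonneg a, abs_nonneg c]

end ProjectedSetting

section Projections

variable {ι : Type*} [Fintype ι]

lemma inner1_sub (v x y : ι → ℝ) : inner1 v (fun j => x j - y j) = inner1 v x - inner1 v y := by
  simp only [inner1, mul_sub, sum_sub_distrib]

lemma innerM_sub (p A B : ι → ι → ℝ) :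
    innerM p (fun j k => A j k - B j k) = innerM p A - innerM p B := by
  simp only [innerM, mul_sub, sum_sub_distrib]

lemma innerM_outer_self_sum (v : ι → ℝ) (u : Fin n → ℝ) (z : Fin n → ι → ℝ) :
    innerM (outer v v) (fun j k => ∑ i, u i * z i j * z i k)
      = ∑ i, u i * inner1 v (z i) ^ 2 := by
  simp only [innerM, outer, inner1, sq, mul_sum, sum_mul]
  calc _ = ∑ j, ∑ k, ∑ i, u i * (v j * z i j * (v k * z i k)) :=
        sum_congr rfl fun j _ => sum_congr rfl fun k _ => sum_congr rfl fun i _ => by ring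
    _ = _ := sum_comm.trans ((sum_congr rfl fun k _ => sum_comm).trans sum_comm)

lemma innerM_outer_self_outer_self (v z : ι → ℝ) :
    innerM (outer v v) (outer z z) = inner1 v z ^ 2 := by
  have h := innerM_outer_self_sum v (n := 1) (fun _ => 1) (fun _ => z)
  simp only [Fin.sum_univ_one, one_mul] at h
  exact h

lemma innerM_outer_self_wCov (v : ι → ℝ) (w : Fin n → ℝ) (x : Fin n → ι → ℝ) :
    innerM (outer v v) (wCov w x)
      = (∑ i, w i)⁻¹ * ∑ i, w i * inner1 v (fun j => x i j - wMean w x j) ^ 2 := by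
  simp only [mul_sum, ← mul_assoc]
  rw [← innerM_outer_self_sum]
  congr 1
  ext j k
  simp only [wCov, mul_sum, mul_assoc]

lemma mul_inner1_wMean_sub (v μ : ι → ℝ) {w : Fin n → ℝ} (x : Fin n → ι → ℝ)
    (hs : ∑ i, w i ≠ 0) :
    (∑ i, w i) * inner1 v (fun j => wMean w x j - μ j)
      = ∑ i, w i * inner1 v (fun j => x i j - μ j) := by
  simp only [wMean, inner1, mul_sum]
  rw [sum_comm]
  refine sum_congr rfl fun j _ => ?_
  simp only [mul_sub, ← mul_sum, sum_sub_distrib, ← sum_mul]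
  field_simp
  rw [mul_sub, mul_sum]
  simp only [mul_assoc]
  ring

variable {y : Fin n → ι → ℝ} {ε δ r : ℝ} {V : Set (ι → ℝ)} {P : Set (ι → ι → ℝ)}
  {μ : ι → ℝ} {Q : ι → ι → ℝ}

lemma IsStable.scalarStable (hS : IsStable y ε δ r V P μ Q) (hVP : TensorSub V P)
    {v : ι → ℝ} (hv : v ∈ V) :
    ScalarStable (fun i => inner1 v (fun j => y i j - μ j)) ε δ (innerM (outer v v) Q) := by
  intro M hM
  obtain ⟨hmean, hsq, -⟩ := hS v hv _ (hVP v hv v hv) M hM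
  simp only [innerM_outer_self_outer_self] at hsq
  obtain rfl | hM0 := M.eq_empty_or_nonempty
  · simp
  have hc : (0 : ℝ) < #M := by exact_mod_cast hM0.card_pos
  constructor
  · rw [show ∑ i ∈ M, inner1 v (fun j => y i j - μ j)
        = #M * ((#M : ℝ)⁻¹ * ∑ i ∈ M, inner1 v (fun j => y i j - μ j)) by field_simp,
      abs_mul, abs_of_pos hc]
    gcongr
  · rw [show ∑ i ∈ M, inner1 v (fun j => y i j - μ j) ^ 2 - #M * innerM (outer v v) Q
        = #M * ((#M : ℝ)⁻¹ * ∑ i ∈ M, inner1 v (fun j => y i j - μ j) ^ 2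
          - innerM (outer v v) Q) by field_simp,
      abs_mul, abs_of_pos hc]
    gcongr

lemma IsStable.abs_innerM_le (hS : IsStable y ε δ r V P μ Q) (hε : 0 ≤ ε) {v : ι → ℝ}
    {p : ι → ι → ℝ} (hv : v ∈ V) (hp : p ∈ P) : |innerM p Q| ≤ r ^ 2 :=
  (hS v hv p hp univ (by rw [card_univ, Fintype.card_fin]; nlinarith [n.cast_nonneg (α := ℝ)])).2.2

end Projections

/-- stability implies closeness of the weighted mean. -/
theorem stability_implies_mean_closeness :
    ∃ C : ℝ, 0 < C ∧
      ∀ (m n : ℕ) (ε δ r lam : ℝ)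
        (V : Set (Fin m → ℝ)) (P : Set (Fin m → Fin m → ℝ))
        (μ : Fin m → ℝ) (Q : Fin m → Fin m → ℝ)
        (y x : Fin n → Fin m → ℝ) (w : Fin n → ℝ),
        0 < ε → ε < δ → δ < 0.1 → 0 < r → 0 < lam →
        TensorSub V P →
        IsStable y (2 * ε) δ r V P μ Q →
        Corruption n ε x y →
        w ∈ weightSet n ε →
        (∀ p ∈ P, |innerM p (fun j k => Q j k - wCov w x j k)| ≤ lam) →
        ∀ v ∈ V, |inner1 v (fun j => wMean w x j - μ j)| ≤
          C * (δ + Real.sqrt (ε * lam) + ε * r) := by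
  refine ⟨14, by norm_num, ?_⟩
  intro m n ε δ r lam V P μ Q y x w hε hεδ hδ hr _ hVP hS hx hw hcov v hv
  obtain ⟨G, hG, hxy⟩ := hx
  have hvv := hVP v hv v hv
  have hs : ∑ i, w i ≠ 0 := (sum_pos_of_mem_weightSet hw (by linarith)).ne'
  have hcentred : ∀ i, inner1 v (fun j => x i j - wMean w x j)
      = inner1 v (fun j => x i j - μ j) - inner1 v (fun j => wMean w x j - μ j) := by
    intro i; simp only [inner1_sub]; ring
  refine ProjectedSetting.abs_le_fourteen_mul
    (f := fun i => inner1 v (fun j => y i j - μ j)) (G := G)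
    ⟨hε, by linarith, by linarith, hr.le, hw, hG, fun i hi => by simp only [hxy i hi],
      hS.scalarStable hVP hv, hS.abs_innerM_le (by linarith) hv hvv,
      mul_inner1_wMean_sub v μ x hs, ?_⟩
  simpa only [innerM_sub, innerM_outer_self_wCov, hcentred] using hcov _ hvv

end Paper
end
end

section
/- There exists an absolute constant C' > 0 such that the following holds. Let Σ ∈ ℝ^{d×d} be positive definite, let y ∼ N(0,Σ), and let ℱ be the truncated spatial sign map with threshold Δ = 0.1d. Then for every u ∈ ℝ^d and every even p ∈ ℕ, (E⟨u, ℱ(y)⟩^p)^{1/p} ≤ C'·√p·(E⟨u, ℱ(y)⟩²)^{1/2}; that is, the distribution of ℱ(y) is O(1)-sub-Gaussian. -/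
open MeasureTheory ProbabilityTheory Matrix Finset Real Filter

noncomputable section

/-! On each piece of its definition the truncated spatial sign is a multiple `s(y) • y` with
`s(y)² ∈ [d/(d+Δ), d/(d-Δ)] = [10/11, 10/9]`, so `⟨u, ℱ(y)⟩ = s(y) ⟨u, y⟩` has `p`-th moment at
most `(10/9)^{p/2}` times that of `⟨u, y⟩` and second moment at least `10/11` times that of
`⟨u, y⟩`. Finally `⟨u, y⟩ ∼ N(0, v)`, and integrating `x^{2m} ≤ (2m)! t^{-2m} cosh (t x)` against
`E cosh (t X) = exp (v t² / 2)` at `t² = 2m / v` gives `E X^{2m} ≤ (2e m v)^m`. -/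

open scoped NNReal

lemma pow_two_mul_le_factorial_mul_cosh (x : ℝ) (m : ℕ) :
    x ^ (2 * m) ≤ (2 * m).factorial * cosh x := by
  have h := le_hasSum (hasSum_cosh x) m fun j _ =>
    div_nonneg ((even_two_mul j).pow_nonneg x) (by positivity)
  rw [div_le_iff₀' (by positivity)] at h
  exact h

lemma integrable_pow_gaussianReal (μ : ℝ) (v : ℝ≥0) (n : ℕ) :
    Integrable (fun x => x ^ n) (gaussianReal μ v) :=
  integrable_pow_of_integrable_exp_mul (X := fun x => x) one_ne_zero
    (integrable_exp_mul_gaussianReal 1) (integrable_exp_mul_gaussianReal (-1)) n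

lemma integral_sq_gaussianReal (v : ℝ≥0) : ∫ x, x ^ 2 ∂gaussianReal 0 v = v := by
  rw [← variance_fun_id_gaussianReal (μ := 0),
    variance_of_integral_eq_zero aemeasurable_id' integral_id_gaussianReal]

lemma integrable_cosh_mul_gaussianReal (v : ℝ≥0) (t : ℝ) :
    Integrable (fun x => cosh (t * x)) (gaussianReal 0 v) := by
  simp_rw [cosh_eq, ← neg_mul]
  exact ((integrable_exp_mul_gaussianReal t).add (integrable_exp_mul_gaussianReal (-t))).div_const 2

lemma integral_cosh_mul_gaussianReal (v : ℝ≥0) (t : ℝ) :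
    ∫ x, cosh (t * x) ∂gaussianReal 0 v = exp (v * t ^ 2 / 2) := by
  have hmgf (s : ℝ) : ∫ x, exp (s * x) ∂gaussianReal 0 v = exp (v * s ^ 2 / 2) := by
    simpa [mgf] using congrFun (mgf_fun_id_gaussianReal (μ := 0) (v := v)) s
  simp_rw [cosh_eq, integral_div, ← neg_mul]
  rw [integral_add (integrable_exp_mul_gaussianReal _) (integrable_exp_mul_gaussianReal _),
    hmgf, hmgf, neg_sq]
  ring

lemma integral_pow_two_mul_gaussianReal_le (v : ℝ≥0) (m : ℕ) :
    ∫ x, x ^ (2 * m) ∂gaussianReal 0 v ≤ (2 * exp 1 * m * v) ^ m := by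
  rcases eq_or_ne m 0 with rfl | hm
  · simp
  rcases eq_or_ne v 0 with rfl | hv
  · simp [gaussianReal_zero_var, hm]
  have hv' : (v : ℝ) ≠ 0 := by exact_mod_cast hv
  set t := √(2 * m / v)
  have ht : 0 < t := by positivity
  have ht2 : t ^ 2 = 2 * m / v := sq_sqrt (by positivity)
  calc ∫ x, x ^ (2 * m) ∂gaussianReal 0 v
      ≤ ∫ x, (2 * m).factorial / t ^ (2 * m) * cosh (t * x) ∂gaussianReal 0 v := by
        refine integral_mono (integrable_pow_gaussianReal 0 v _) ?_ fun x => ?_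
        · exact (integrable_cosh_mul_gaussianReal v t).const_mul _
        · rw [div_mul_eq_mul_div, le_div_iff₀ (by positivity), ← mul_pow, mul_comm x]
          exact pow_two_mul_le_factorial_mul_cosh _ m
    _ = (2 * m).factorial / (2 * m / v) ^ m * exp m := by
        rw [integral_const_mul, integral_cosh_mul_gaussianReal, ht2, pow_mul, ht2]
        field_simp
    _ ≤ (2 * m) ^ (2 * m) / (2 * m / v) ^ m * exp m := by
        gcongr
        exact_mod_cast Nat.factorial_le_pow (2 * m)
    _ = (2 * exp 1 * m * v) ^ m := by
        rw [← exp_one_pow, pow_mul, ← div_pow, ← mul_pow]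
        congr 1
        field_simp

lemma moment_gaussianReal_le (v : ℝ≥0) {p : ℕ} (hp : Even p) (hp0 : p ≠ 0) :
    (∫ x, x ^ p ∂gaussianReal 0 v) ^ (p⁻¹ : ℝ) ≤
      √(exp 1) * √p * √(∫ x, x ^ 2 ∂gaussianReal 0 v) := by
  obtain ⟨m, rfl⟩ := hp
  rw [← two_mul] at hp0 ⊢
  have hmoment := integral_pow_two_mul_gaussianReal_le v m
  calc (∫ x, x ^ (2 * m) ∂gaussianReal 0 v) ^ ((2 * m : ℕ)⁻¹ : ℝ)
      ≤ ((√(2 * exp 1 * m * v)) ^ (2 * m)) ^ ((2 * m : ℕ)⁻¹ : ℝ) := by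
        rw [pow_mul, sq_sqrt (by positivity)]
        exact rpow_le_rpow (integral_nonneg fun x => (even_two_mul m).pow_nonneg x) hmoment
          (by positivity)
    _ = √(exp 1) * √(2 * m : ℕ) * √(∫ x, x ^ 2 ∂gaussianReal 0 v) := by
        rw [pow_rpow_inv_natCast (sqrt_nonneg _) hp0, integral_sq_gaussianReal,
          ← sqrt_mul (exp_pos 1).le, ← sqrt_mul (by positivity)]
        push_cast
        ring_nf

lemma moment_mul_le_of_sq_mem_Icc {Ω : Type*} [MeasurableSpace Ω] {μ : Measure Ω}
    {X s : Ω → ℝ} {a b K : ℝ} {p : ℕ} (hp : Even p) (hp0 : p ≠ 0) (ha : 0 < a) (hK : 0 ≤ K)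
    (hs : AEStronglyMeasurable s μ) (hsab : ∀ ω, s ω ^ 2 ∈ Set.Icc a b)
    (hXp : Integrable (fun ω => X ω ^ p) μ) (hX2 : Integrable (fun ω => X ω ^ 2) μ)
    (hX : (∫ ω, X ω ^ p ∂μ) ^ (p⁻¹ : ℝ) ≤ K * √(∫ ω, X ω ^ 2 ∂μ)) :
    (∫ ω, (s ω * X ω) ^ p ∂μ) ^ (p⁻¹ : ℝ) ≤ K * √(b / a) * √(∫ ω, (s ω * X ω) ^ 2 ∂μ) := by
  have hupper : ∫ ω, (s ω * X ω) ^ p ∂μ ≤ √b ^ p * ∫ ω, X ω ^ p ∂μ := by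
    rw [← integral_const_mul]
    refine integral_mono_of_nonneg (.of_forall fun ω => hp.pow_nonneg _) (hXp.const_mul _)
      (.of_forall fun ω => ?_)
    dsimp only
    rw [mul_pow, ← hp.pow_abs (s ω)]
    exact mul_le_mul_of_nonneg_right
      (pow_le_pow_left₀ (abs_nonneg _) (abs_le_sqrt (hsab ω).2) p) (hp.pow_nonneg _)
  have hlower : a * ∫ ω, X ω ^ 2 ∂μ ≤ ∫ ω, (s ω * X ω) ^ 2 ∂μ := by
    rw [← integral_const_mul]
    refine integral_mono_of_nonneg (.of_forall fun ω => by positivity) ?_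
      (.of_forall fun ω => ?_)
    · refine (hX2.const_mul b).mono' ((hs.pow 2).mul hX2.1 |>.congr (.of_forall fun ω => ?_))
        (.of_forall fun ω => ?_)
      · simp [mul_pow]
      · rw [norm_of_nonneg (sq_nonneg _), mul_pow]
        exact mul_le_mul_of_nonneg_right (hsab ω).2 (sq_nonneg _)
    · dsimp only
      rw [mul_pow]
      exact mul_le_mul_of_nonneg_right (hsab ω).1 (sq_nonneg _)
  calc (∫ ω, (s ω * X ω) ^ p ∂μ) ^ (p⁻¹ : ℝ)
      ≤ (√b ^ p * ∫ ω, X ω ^ p ∂μ) ^ (p⁻¹ : ℝ) :=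
        rpow_le_rpow (integral_nonneg fun ω => hp.pow_nonneg _) hupper (by positivity)
    _ = √b * (∫ ω, X ω ^ p ∂μ) ^ (p⁻¹ : ℝ) := by
        rw [mul_rpow (by positivity) (integral_nonneg fun ω => hp.pow_nonneg _),
          pow_rpow_inv_natCast (sqrt_nonneg b) hp0]
    _ ≤ √b * (K * √((∫ ω, (s ω * X ω) ^ 2 ∂μ) / a)) := by
        gcongr
        refine hX.trans (mul_le_mul_of_nonneg_left (sqrt_le_sqrt ?_) hK)
        rwa [le_div_iff₀ ha, mul_comm]
    _ = K * √(b / a) * √(∫ ω, (s ω * X ω) ^ 2 ∂μ) := by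
        have hJ : 0 ≤ ∫ ω, (s ω * X ω) ^ 2 ∂μ := integral_nonneg fun ω => sq_nonneg _
        rw [mul_left_comm, ← sqrt_mul' b (div_nonneg hJ ha.le), mul_assoc, ← sqrt_mul' _ hJ]
        ring_nf

section HasLaw

variable {Ω : Type*} [MeasurableSpace Ω] {P : Measure Ω} {X : Ω → ℝ} {v : ℝ≥0}

lemma integrable_pow_of_hasLaw_gaussianReal (hX : HasLaw X (gaussianReal 0 v) P) (n : ℕ) :
    Integrable (fun ω => X ω ^ n) P := by
  have h := integrable_pow_gaussianReal 0 v n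
  rw [← hX.map_eq, integrable_map_measure (by fun_prop) hX.aemeasurable] at h
  exact h

lemma moment_le_of_hasLaw_gaussianReal (hX : HasLaw X (gaussianReal 0 v) P) {p : ℕ}
    (hp : Even p) (hp0 : p ≠ 0) :
    (∫ ω, X ω ^ p ∂P) ^ (p⁻¹ : ℝ) ≤ √(exp 1) * √p * √(∫ ω, X ω ^ 2 ∂P) := by
  have h := moment_gaussianReal_le v hp hp0
  rw [← hX.integral_comp (f := fun x => x ^ p) (by fun_prop),
    ← hX.integral_comp (f := fun x => x ^ 2) (by fun_prop)] at h
  exact h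

end HasLaw

namespace Paper

def truncSignScale (d : ℕ) (Δ : ℝ) (y : Fin d → ℝ) : ℝ :=
  if ∑ i, y i ^ 2 < (d : ℝ) - Δ then √((d : ℝ) / ((d : ℝ) - Δ))
  else if (d : ℝ) + Δ < ∑ i, y i ^ 2 then √((d : ℝ) / ((d : ℝ) + Δ))
  else √d / √(∑ i, y i ^ 2)

lemma sum_mul_truncSign (d : ℕ) (Δ : ℝ) (u y : Fin d → ℝ) :
    ∑ i, u i * truncSign d Δ y i = truncSignScale d Δ y * ∑ i, u i * y i := by
  rw [Finset.mul_sum]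
  unfold truncSign truncSignScale spSign
  split_ifs <;> exact Finset.sum_congr rfl fun i _ => by ring

lemma measurable_truncSignScale (d : ℕ) (Δ : ℝ) : Measurable (truncSignScale d Δ) := by
  unfold truncSignScale
  refine Measurable.ite (measurableSet_lt (by fun_prop) measurable_const) measurable_const
    (Measurable.ite (measurableSet_lt measurable_const (by fun_prop)) measurable_const ?_)
  fun_prop

lemma truncSignScale_sq_mem_Icc {d : ℕ} {θ : ℝ} (hd : 0 < d) (hθ : 0 < θ) (hθ1 : θ < 1)
    (y : Fin d → ℝ) :
    truncSignScale d (θ * d) y ^ 2 ∈ Set.Icc (1 / (1 + θ)) (1 / (1 - θ)) := by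
  have hd' : (0 : ℝ) < d := by exact_mod_cast hd
  have hlo : (0 : ℝ) < d - θ * d := by nlinarith
  have key : ∀ r : ℝ, d - θ * d ≤ r → r ≤ d + θ * d →
      (d : ℝ) / r ∈ Set.Icc (1 / (1 + θ)) (1 / (1 - θ)) := by
    intro r hr1 hr2
    have hr : 0 < r := hlo.trans_le hr1
    constructor
    · calc 1 / (1 + θ) = d / (d + θ * d) := by field_simp
        _ ≤ d / r := div_le_div_of_nonneg_left hd'.le hr hr2
    · calc (d : ℝ) / r ≤ d / (d - θ * d) := div_le_div_of_nonneg_left hd'.le hlo hr1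
        _ = 1 / (1 - θ) := by field_simp
  unfold truncSignScale
  split_ifs with h1 h2
  · rw [sq_sqrt (div_nonneg hd'.le hlo.le)]
    exact key _ le_rfl (by nlinarith)
  · rw [sq_sqrt (by positivity)]
    exact key _ (by nlinarith) le_rfl
  · rw [div_pow, sq_sqrt hd'.le, sq_sqrt (hlo.le.trans (not_lt.mp h1))]
    exact key _ (not_lt.mp h1) (not_lt.mp h2)

lemma hasLaw_sum_mul_gaussianOf {d : ℕ} (S : Matrix (Fin d) (Fin d) ℝ) (u : Fin d → ℝ) :
    ∃ v : ℝ≥0, HasLaw (fun y => ∑ i, u i * y i) (gaussianReal 0 v) (gaussianOf S) := by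
  let E := EuclideanSpace ℝ (Fin d)
  have hstd : stdGaussian d = (ProbabilityTheory.stdGaussian E).map WithLp.ofLp := by
    rw [← map_pi_eq_stdGaussian, Measure.map_map (by fun_prop) (by fun_prop)]
    exact (Measure.map_id' ..).symm
  let L : StrongDual ℝ E := innerSL ℝ (WithLp.toLp 2 (u ᵥ* matSqrt S))
  have hL : ((fun y => ∑ i, u i * y i) ∘ (matSqrt S).mulVec) ∘ WithLp.ofLp = ⇑L := by
    ext x
    change u ⬝ᵥ (matSqrt S *ᵥ x.ofLp) = _
    rw [Matrix.dotProduct_mulVec, innerSL_apply_apply, EuclideanSpace.inner_eq_star_dotProduct,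
      star_trivial, dotProduct_comm]
  refine ⟨Var[L; ProbabilityTheory.stdGaussian E].toNNReal,
    Measurable.aemeasurable (by fun_prop), ?_⟩
  rw [gaussianOf, hstd, Measure.map_map (by fun_prop) (by fun_prop),
    Measure.map_map (by fun_prop) (by fun_prop), hL, IsGaussian.map_eq_gaussianReal,
    integral_strongDual_stdGaussian]

/-- the truncated spatial sign of a Gaussian is O(1)-sub-Gaussian. -/
theorem truncated_spatial_sign_subgaussian :
    ∃ C' : ℝ, 0 < C' ∧
      ∀ (d : ℕ) (S : Matrix (Fin d) (Fin d) ℝ), S.PosDef →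
        ∀ (u : Fin d → ℝ) (p : ℕ), Even p → 0 < p →
          (∫ y, (∑ i, u i * truncSign d (0.1 * (d : ℝ)) y i) ^ p ∂(gaussianOf S))
              ^ ((p : ℝ)⁻¹)
            ≤ C' * Real.sqrt p *
              Real.sqrt (∫ y, (∑ i, u i * truncSign d (0.1 * (d : ℝ)) y i) ^ 2
                ∂(gaussianOf S)) := by
  refine ⟨2, two_pos, fun d S _ u p hp hp0 => ?_⟩
  rcases Nat.eq_zero_or_pos d with rfl | hd
  · simp [zero_pow hp0.ne', hp0.ne']
  obtain ⟨v, hv⟩ := hasLaw_sum_mul_gaussianOf S u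
  simp_rw [sum_mul_truncSign]
  calc _ ≤ √(exp 1) * √p * √((1 / (1 - 0.1)) / (1 / (1 + 0.1))) *
        √(∫ y, (truncSignScale d (0.1 * d) y * ∑ i, u i * y i) ^ 2 ∂gaussianOf S) :=
        moment_mul_le_of_sq_mem_Icc hp hp0.ne' (by norm_num) (by positivity)
          (measurable_truncSignScale _ _).aestronglyMeasurable
          (truncSignScale_sq_mem_Icc hd (by norm_num) (by norm_num))
          (integrable_pow_of_hasLaw_gaussianReal hv p)
          (integrable_pow_of_hasLaw_gaussianReal hv 2)
          (moment_le_of_hasLaw_gaussianReal hv hp hp0.ne')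
    _ ≤ _ := by
        rw [mul_right_comm (√(exp 1))]
        gcongr
        rw [← sqrt_mul (exp_pos 1).le, sqrt_le_iff]
        norm_num
        linarith [exp_one_lt_d9]

end Paper
end
end
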